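/- arXiv:1901.01698 — 4 statements merged into one kernel-verified Lean document; each statement's English description precedes it below -/
import Mathlib

section
/- For the function f : ℝ² → ℝ defined by f(x,y) = |x² - y⁴|, there exists a constant c > 0 and ε > 0 such that f(x,y) ≥ c · dist((x,y), Z)² for all (x,y) with ‖(x,y)‖ ≤ ε, where Z = {(x,y) : x² = y⁴} is the zero set of f. -/
/-!
The zero set contains the point `(±y², y)` on the horizontal line through `(x, y)`, with the sign
of `x`; its distance to `(x, y)` is `||x| - y²|`, and
`(|x| - y²)² ≤ ||x| - y²| (|x| + y²) = |x² - y⁴|`. So the bound holds on all of `ℝ²` with `c = 1`.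
-/

open Metric

theorem sq_abs_sub_le_abs_sq_sub {α : Type*} [CommRing α] [LinearOrder α] [IsStrictOrderedRing α]
    (a : α) {b : α} (hb : 0 ≤ b) : (|a| - b) ^ 2 ≤ |a ^ 2 - b ^ 2| :=
  calc (|a| - b) ^ 2 = |(|a| - b)| * |(|a| - b)| := by rw [abs_mul_abs_self, sq]
    _ ≤ |(|a| - b)| * (|a| + b) :=
      mul_le_mul_of_nonneg_left (abs_sub_le_iff.mpr ⟨by linarith, by linarith [abs_nonneg a]⟩)
        (abs_nonneg _)
    _ = |a ^ 2 - b ^ 2| := by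
      rw [← sq_abs a, sq_sub_sq, abs_mul, abs_of_nonneg (add_nonneg (abs_nonneg a) hb), mul_comm]

theorem exists_sq_eq_and_sub_sq_eq {α : Type*} [CommRing α] [LinearOrder α] [IsStrictOrderedRing α]
    (a b : α) : ∃ c, c ^ 2 = b ^ 2 ∧ (a - c) ^ 2 = (|a| - b) ^ 2 := by
  rcases le_total 0 a with ha | ha
  · exact ⟨b, rfl, by rw [abs_of_nonneg ha]⟩
  · exact ⟨-b, neg_sq b, by rw [abs_of_nonpos ha]; ring⟩

theorem EuclideanSpace.dist_sq_eq_of_apply_one_eq {p q : EuclideanSpace ℝ (Fin 2)}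
    (h : p 1 = q 1) : dist p q ^ 2 = (p 0 - q 0) ^ 2 := by
  rw [EuclideanSpace.dist_sq_eq, Fin.sum_univ_two, h, dist_self, Real.dist_eq, sq_abs]
  ring

theorem infDist_sq_le_abs_sq_sub_pow_four (p : EuclideanSpace ℝ (Fin 2)) :
    infDist p {q : EuclideanSpace ℝ (Fin 2) | q 0 ^ 2 = q 1 ^ 4} ^ 2 ≤ |p 0 ^ 2 - p 1 ^ 4| := by
  obtain ⟨c, hc, hpc⟩ := exists_sq_eq_and_sub_sq_eq (p 0) (p 1 ^ 2)
  have hmem : !₂[c, p 1] ∈ {q : EuclideanSpace ℝ (Fin 2) | q 0 ^ 2 = q 1 ^ 4} := by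
    simp only [Set.mem_ofPred_eq, Matrix.cons_val_zero, Matrix.cons_val_one, Matrix.cons_val_fin_one,
      hc]
    ring
  calc infDist p _ ^ 2 ≤ dist p !₂[c, p 1] ^ 2 :=
        pow_le_pow_left₀ infDist_nonneg (infDist_le_dist_of_mem hmem) 2
    _ = (|p 0| - p 1 ^ 2) ^ 2 := by
        rw [EuclideanSpace.dist_sq_eq_of_apply_one_eq (by simp)]
        simpa using hpc
    _ ≤ |p 0 ^ 2 - (p 1 ^ 2) ^ 2| := sq_abs_sub_le_abs_sq_sub _ (sq_nonneg _)
    _ = |p 0 ^ 2 - p 1 ^ 4| := by ring_nf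

theorem stmt0 :
    ∃ c > (0:ℝ), ∃ ε > (0:ℝ), ∀ p : EuclideanSpace ℝ (Fin 2), ‖p‖ ≤ ε →
      |p 0 ^ 2 - p 1 ^ 4| ≥
        c * (Metric.infDist p {q : EuclideanSpace ℝ (Fin 2) | q 0 ^ 2 = q 1 ^ 4}) ^ 2 :=
  ⟨1, one_pos, 1, one_pos, fun p _ => by
    rw [one_mul]
    exact infDist_sq_le_abs_sq_sub_pow_four p⟩
end

section
/- For the function f : ℝ² → ℝ defined by f(x,y) = |x² - y⁴|, there is no constant c > 0 such that for all (x,y) in some neighborhood of the origin, the minimal norm of limiting subgradients of f at (x,y) is at least c · dist((x,y), Z), where Z = {(x,y) : x² = y⁴}. Specifically, along the curve (0,t) as t → 0, the minimal subgradient norm is 4t³ while dist((0,t),Z) is of order t², so their ratio tends to 0. -/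
open Filter Topology Metric

noncomputable section

/-- The Fréchet (regular) subdifferential of `f` at `x`. -/
def frechetSubdiff {n : ℕ} (f : EuclideanSpace ℝ (Fin n) → ℝ) (x : EuclideanSpace ℝ (Fin n)) :
    Set (EuclideanSpace ℝ (Fin n)) :=
  {v | ∀ ε > (0:ℝ), ∃ δ > (0:ℝ), ∀ y, ‖y - x‖ < δ →
    f y ≥ f x + (inner ℝ v (y - x) : ℝ) - ε * ‖y - x‖}

/-- The limiting (Mordukhovich) subdifferential of `f` at `x`. -/
def limitingSubdiff {n : ℕ} (f : EuclideanSpace ℝ (Fin n) → ℝ) (x : EuclideanSpace ℝ (Fin n)) :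
    Set (EuclideanSpace ℝ (Fin n)) :=
  {v | ∃ xs vs : ℕ → EuclideanSpace ℝ (Fin n),
    Tendsto xs atTop (𝓝 x) ∧ Tendsto (fun k => f (xs k)) atTop (𝓝 (f x)) ∧
    Tendsto vs atTop (𝓝 v) ∧ ∀ k, vs k ∈ frechetSubdiff f (xs k)}

/-- The nonsmooth slope: minimal norm of limiting subgradients. -/
def mf {n : ℕ} (f : EuclideanSpace ℝ (Fin n) → ℝ) (x : EuclideanSpace ℝ (Fin n)) : ℝ :=
  sInf (norm '' limitingSubdiff f x)

def fEx : EuclideanSpace ℝ (Fin 2) → ℝ := fun p => |p 0 ^ 2 - p 1 ^ 4|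

def Zset : Set (EuclideanSpace ℝ (Fin 2)) := {q | q 0 ^ 2 = q 1 ^ 4}

/-! On the `y`-axis, `f` agrees with its smooth minorant `y⁴ - x²`, whose gradient at `(0, t)` is
`(0, 4t³)`; hence `m_f(0, t) ≤ 4|t|³`. On the other hand, a point `(x, y)` of `Z` is at distance at
least `t² / 4` from `(0, t)` when `0 < t ≤ 2`: either `|y - t| ≥ t / 2`, or `y > t / 2` and then
`|x| = y² > t² / 4`. So `m_f / dist(·, Z)` is `O(t)` along the axis, which rules out any bound
`m_f ≥ c · dist(·, Z)` with `c > 0`. -/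

section Subdifferential

variable {n : ℕ} {f g : EuclideanSpace ℝ (Fin n) → ℝ} {x v : EuclideanSpace ℝ (Fin n)}

theorem HasGradientAt.mem_frechetSubdiff (h : HasGradientAt f v x) : v ∈ frechetSubdiff f x := by
  intro ε hε
  obtain ⟨δ, hδ, hball⟩ := Metric.eventually_nhds_iff.1 ((hasGradientAt_iff_isLittleO.1 h).def hε)
  refine ⟨δ, hδ, fun y hy => ?_⟩
  have hy' := hball (by rwa [dist_eq_norm])
  rw [Real.norm_eq_abs] at hy'
  linarith [neg_abs_le (f y - f x - inner ℝ v (y - x))]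

theorem mem_frechetSubdiff_of_le (hv : v ∈ frechetSubdiff g x) (hle : g ≤ f) (hx : g x = f x) :
    v ∈ frechetSubdiff f x := by
  intro ε hε
  obtain ⟨δ, hδ, hg⟩ := hv ε hε
  exact ⟨δ, hδ, fun y hy => hx ▸ (hg y hy).trans (hle y)⟩

theorem frechetSubdiff_subset_limitingSubdiff : frechetSubdiff f x ⊆ limitingSubdiff f x :=
  fun v hv => ⟨fun _ => x, fun _ => v, tendsto_const_nhds, tendsto_const_nhds,
    tendsto_const_nhds, fun _ => hv⟩

theorem mf_nonneg : 0 ≤ mf f x :=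
  Real.sInf_nonneg (by rintro _ ⟨v, -, rfl⟩; exact norm_nonneg v)

theorem mf_le_norm (hv : v ∈ limitingSubdiff f x) : mf f x ≤ ‖v‖ :=
  csInf_le ⟨0, by rintro _ ⟨w, -, rfl⟩; exact norm_nonneg w⟩ ⟨v, hv, rfl⟩

end Subdifferential

def axisPoint (t : ℝ) : EuclideanSpace ℝ (Fin 2) := (EuclideanSpace.equiv (Fin 2) ℝ).symm ![0, t]

@[simp]
theorem axisPoint_apply_zero (t : ℝ) : axisPoint t 0 = 0 := rfl

@[simp]
theorem axisPoint_apply_one (t : ℝ) : axisPoint t 1 = t := rfl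

theorem norm_axisPoint (t : ℝ) : ‖axisPoint t‖ = |t| := by
  simp [axisPoint, EuclideanSpace.norm_eq, Fin.sum_univ_two, Real.sqrt_sq_eq_abs]

theorem hasGradientAt_quartic_sub_sq_axisPoint (t : ℝ) :
    HasGradientAt (fun p : EuclideanSpace ℝ (Fin 2) => p 1 ^ 4 - p 0 ^ 2)
      (axisPoint (4 * t ^ 3)) (axisPoint t) := by
  have h0 := (EuclideanSpace.proj (0 : Fin 2) : EuclideanSpace ℝ (Fin 2) →L[ℝ] ℝ).hasFDerivAt
    (x := axisPoint t) |>.pow 2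
  have h1 := (EuclideanSpace.proj (1 : Fin 2) : EuclideanSpace ℝ (Fin 2) →L[ℝ] ℝ).hasFDerivAt
    (x := axisPoint t) |>.pow 4
  refine (h1.sub h0).congr_fderiv ?_
  ext w
  simp [EuclideanSpace.inner_eq_star_dotProduct, dotProduct, mul_comm]

theorem mf_fEx_axisPoint_le (t : ℝ) : mf fEx (axisPoint t) ≤ 4 * |t| ^ 3 := by
  have hle : (fun p : EuclideanSpace ℝ (Fin 2) => p 1 ^ 4 - p 0 ^ 2) ≤ fEx := fun p => by
    rw [fEx, abs_sub_comm]; exact le_abs_self _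
  have htouch : axisPoint t 1 ^ 4 - axisPoint t 0 ^ 2 = fEx (axisPoint t) := by
    simp [fEx, (by decide : Even 4).pow_abs]
  have hv := frechetSubdiff_subset_limitingSubdiff <| mem_frechetSubdiff_of_le
    (hasGradientAt_quartic_sub_sq_axisPoint t).mem_frechetSubdiff hle htouch
  calc mf fEx (axisPoint t) ≤ ‖axisPoint (4 * t ^ 3)‖ := mf_le_norm hv
    _ = 4 * |t| ^ 3 := by rw [norm_axisPoint, abs_mul, abs_pow]; norm_num

theorem sq_div_four_le_infDist_axisPoint_Zset {t : ℝ} (ht : 0 < t) (ht2 : t ≤ 2) :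
    t ^ 2 / 4 ≤ infDist (axisPoint t) Zset := by
  refine (le_infDist ⟨0, by simp [Zset]⟩).2 fun q (hq : q 0 ^ 2 = q 1 ^ 4) => ?_
  have hx : |q 0| ≤ dist (axisPoint t) q := by
    simpa [Real.dist_eq] using PiLp.dist_apply_le (axisPoint t) q 0
  have hy : |t - q 1| ≤ dist (axisPoint t) q := by
    simpa [Real.dist_eq] using PiLp.dist_apply_le (axisPoint t) q 1
  have hq0 : |q 0| = q 1 ^ 2 := by
    rw [← sq_eq_sq₀ (abs_nonneg _) (sq_nonneg _), sq_abs, hq]; ring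
  rcases le_or_gt (t / 2) (q 1) with h | h
  · nlinarith
  · nlinarith [le_abs_self (t - q 1)]

theorem tendsto_mf_fEx_div_infDist_axisPoint :
    Tendsto (fun t => mf fEx (axisPoint t) / infDist (axisPoint t) Zset) (𝓝[>] 0) (𝓝 0) := by
  have hbound : ∀ᶠ t in 𝓝[>] (0 : ℝ),
      mf fEx (axisPoint t) / infDist (axisPoint t) Zset ≤ 16 * t := by
    filter_upwards [Ioo_mem_nhdsGT (show (0 : ℝ) < 2 by norm_num)] with t ⟨ht, ht2⟩
    calc mf fEx (axisPoint t) / infDist (axisPoint t) Zset ≤ 4 * t ^ 3 / (t ^ 2 / 4) := by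
          gcongr
          · exact (mf_fEx_axisPoint_le t).trans_eq (by rw [abs_of_pos ht])
          · exact sq_div_four_le_infDist_axisPoint_Zset ht ht2.le
      _ = 16 * t := by field_simp; norm_num
  have hlin : Tendsto (fun t : ℝ => 16 * t) (𝓝[>] 0) (𝓝 0) := by
    simpa using (tendsto_id.const_mul (16 : ℝ)).mono_left (nhdsWithin_le_nhds (a := (0 : ℝ)))
  exact tendsto_of_tendsto_of_tendsto_of_le_of_le' tendsto_const_nhds hlin
    (Eventually.of_forall fun _ => div_nonneg mf_nonneg infDist_nonneg) hbound

theorem stmt1 :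
    (¬ ∃ c > (0:ℝ), ∃ ε > (0:ℝ), ∀ p : EuclideanSpace ℝ (Fin 2), ‖p‖ < ε →
        mf fEx p ≥ c * Metric.infDist p Zset) ∧
    Tendsto
      (fun t : ℝ => mf fEx ((EuclideanSpace.equiv (Fin 2) ℝ).symm ![0, t]) /
        Metric.infDist ((EuclideanSpace.equiv (Fin 2) ℝ).symm ![0, t]) Zset)
      (𝓝[>] 0) (𝓝 0) := by
  refine ⟨?_, tendsto_mf_fEx_div_infDist_axisPoint⟩
  rintro ⟨c, hc, ε, hε, H⟩
  have hsmall := (tendsto_mf_fEx_div_infDist_axisPoint.eventually (gt_mem_nhds hc)).and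
    (Ioo_mem_nhdsGT (lt_min hε two_pos))
  obtain ⟨t, hratio, ht, htε⟩ := hsmall.exists
  have hdist := sq_div_four_le_infDist_axisPoint_Zset ht (htε.le.trans (min_le_right _ _))
  have hgrowth := H (axisPoint t) <| by
    rw [norm_axisPoint, abs_of_pos ht]; exact htε.trans_le (min_le_left _ _)
  rw [div_lt_iff₀ ((by positivity : (0 : ℝ) < t ^ 2 / 4).trans_le hdist)] at hratio
  linarith
end
end

section
/- Let f : ℝ → ℝ be defined by f(x) = 1 + x² for x < 0 and f(x) = x² for x ≥ 0. Then the limiting subdifferential of f satisfies ∂f(x) = {2x} for x > 0 and for x < 0, and m_f(x) = 2|x| for all x ≠ 0; consequently ∂f is 1-order strongly metrically subregular at 0 for 0 (m_f(x) ≥ 2|x| near 0), but f fails the Łojasiewicz gradient inequality at 0 with exponent 1/2: there are no constants c > 0, ε > 0 with m_f(x) ≥ c·|f(x) - f(0)|^{1/2} for all 0 < |x| < ε. -/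
/-!
Away from `0` the function `f4` is a smooth parabola, so its limiting subdifferential at `x ≠ 0`
is just the derivative `2 * x`, and the nonsmooth slope `mfR f4 x = 2 * |x|` tends to `0`.
On the left of `0`, however, the jump of `f4` keeps `|f4 x - f4 0| ≥ 1`, so no inequality
`mfR f4 x ≥ c * |f4 x - f4 0| ^ (1 / 2)` with `c > 0` can hold near `0`.
-/

open Filter Topology

noncomputable section

/-- The Fréchet (regular) subdifferential of `f : ℝ → ℝ` at `x`. -/
def frechetSubdiffR (f : ℝ → ℝ) (x : ℝ) : Set ℝ :=
  {v | ∀ ε > (0:ℝ), ∃ δ > (0:ℝ), ∀ y, |y - x| < δ →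
    f y ≥ f x + v * (y - x) - ε * |y - x|}

/-- The limiting (Mordukhovich) subdifferential of `f : ℝ → ℝ` at `x`. -/
def limitingSubdiffR (f : ℝ → ℝ) (x : ℝ) : Set ℝ :=
  {v | ∃ xs vs : ℕ → ℝ,
    Tendsto xs atTop (𝓝 x) ∧ Tendsto (fun k => f (xs k)) atTop (𝓝 (f x)) ∧
    Tendsto vs atTop (𝓝 v) ∧ ∀ k, vs k ∈ frechetSubdiffR f (xs k)}

/-- The nonsmooth slope: minimal norm of limiting subgradients. -/
def mfR (f : ℝ → ℝ) (x : ℝ) : ℝ := sInf ((fun v => |v|) '' limitingSubdiffR f x)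

def f4 : ℝ → ℝ := fun x => if x < 0 then 1 + x ^ 2 else x ^ 2

section FrechetSubdiff

variable {f : ℝ → ℝ} {x v d ε : ℝ}

lemma HasDerivAt.mem_frechetSubdiffR (hd : HasDerivAt f d x) : d ∈ frechetSubdiffR f x := by
  intro ε hε
  obtain ⟨δ, hδ, hclose⟩ :=
    Metric.eventually_nhds_iff.mp ((hasDerivAt_iff_isLittleO.mp hd).def hε)
  refine ⟨δ, hδ, fun y hy => ?_⟩
  have hy' := hclose (show dist y x < δ by rwa [Real.dist_eq])
  simp only [Real.norm_eq_abs, smul_eq_mul] at hy'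
  linarith [(abs_le.mp hy').1]

lemma eventually_sub_le_slope_of_mem_frechetSubdiffR (hv : v ∈ frechetSubdiffR f x)
    (hε : 0 < ε) : ∀ᶠ y in 𝓝[>] x, v - ε ≤ slope f x y := by
  obtain ⟨δ, hδ, hsub⟩ := hv ε hε
  filter_upwards [Ioo_mem_nhdsGT (lt_add_of_pos_right x hδ)] with y ⟨hxy, hyδ⟩
  have hy := hsub y (by rw [abs_of_pos (sub_pos.2 hxy)]; linarith)
  rw [abs_of_pos (sub_pos.2 hxy)] at hy
  rw [slope_def_field, le_div_iff₀ (sub_pos.2 hxy)]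
  linarith

lemma eventually_slope_le_add_of_mem_frechetSubdiffR (hv : v ∈ frechetSubdiffR f x)
    (hε : 0 < ε) : ∀ᶠ y in 𝓝[<] x, slope f x y ≤ v + ε := by
  obtain ⟨δ, hδ, hsub⟩ := hv ε hε
  filter_upwards [Ioo_mem_nhdsLT (sub_lt_self x hδ)] with y ⟨hyδ, hyx⟩
  have hy := hsub y (by rw [abs_of_neg (sub_neg.2 hyx)]; linarith)
  rw [abs_of_neg (sub_neg.2 hyx)] at hy
  rw [slope_def_field, div_le_iff_of_neg (sub_neg.2 hyx)]
  linarith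

/-- The right and left difference quotients squeeze `d` into `[v - ε, v + ε]` for every `ε`. -/
lemma HasDerivAt.eq_of_mem_frechetSubdiffR (hd : HasDerivAt f d x)
    (hv : v ∈ frechetSubdiffR f x) : v = d := by
  have hslope := hasDerivAt_iff_tendsto_slope.mp hd
  apply le_antisymm
  · refine le_of_forall_pos_le_add fun ε hε => ?_
    have := ge_of_tendsto (hslope.mono_left (nhdsGT_le_nhdsNE x))
      (eventually_sub_le_slope_of_mem_frechetSubdiffR hv hε)
    linarith
  · refine le_of_forall_pos_le_add fun ε hε => ?_
    exact le_of_tendsto (hslope.mono_left (nhdsLT_le_nhdsNE x))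
      (eventually_slope_le_add_of_mem_frechetSubdiffR hv hε)

lemma HasDerivAt.frechetSubdiffR_eq (hd : HasDerivAt f d x) : frechetSubdiffR f x = {d} :=
  Set.eq_singleton_iff_unique_mem.mpr
    ⟨hd.mem_frechetSubdiffR, fun _ hv => hd.eq_of_mem_frechetSubdiffR hv⟩

lemma limitingSubdiffR_eq_of_eventually_hasDerivAt {f' : ℝ → ℝ}
    (hd : ∀ᶠ y in 𝓝 x, HasDerivAt f (f' y) y) (hf' : ContinuousAt f' x) :
    limitingSubdiffR f x = {f' x} := by
  refine Set.eq_singleton_iff_unique_mem.mpr ⟨?_, ?_⟩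
  · exact ⟨fun _ => x, fun _ => f' x, tendsto_const_nhds, tendsto_const_nhds,
      tendsto_const_nhds, fun _ => hd.self_of_nhds.mem_frechetSubdiffR⟩
  · rintro v ⟨xs, vs, hxs, -, hvs, hmem⟩
    have hvs_eq : vs =ᶠ[atTop] fun k => f' (xs k) := by
      filter_upwards [hxs.eventually hd] with k hk
      exact hk.eq_of_mem_frechetSubdiffR (hmem k)
    exact tendsto_nhds_unique hvs ((hf'.tendsto.comp hxs).congr' hvs_eq.symm)

lemma mfR_eq_abs_of_limitingSubdiffR_eq (h : limitingSubdiffR f x = {v}) : mfR f x = |v| := by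
  rw [mfR, h, Set.image_singleton, csInf_singleton]

end FrechetSubdiff

lemma f4_of_neg {x : ℝ} (hx : x < 0) : f4 x = 1 + x ^ 2 := if_pos hx

lemma f4_of_nonneg {x : ℝ} (hx : 0 ≤ x) : f4 x = x ^ 2 := if_neg hx.not_gt

lemma hasDerivAt_f4 {x : ℝ} (hx : x ≠ 0) : HasDerivAt f4 (2 * x) x := by
  have hsq : HasDerivAt (fun y : ℝ => y ^ 2) (2 * x) x := by
    simpa using hasDerivAt_pow 2 x
  rcases hx.lt_or_gt with hneg | hpos
  · refine (hsq.const_add 1).congr_of_eventuallyEq ?_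
    filter_upwards [Iio_mem_nhds hneg] with y hy
    exact f4_of_neg hy
  · refine hsq.congr_of_eventuallyEq ?_
    filter_upwards [Ioi_mem_nhds hpos] with y hy
    exact f4_of_nonneg (le_of_lt hy)

lemma limitingSubdiffR_f4 {x : ℝ} (hx : x ≠ 0) : limitingSubdiffR f4 x = {2 * x} :=
  limitingSubdiffR_eq_of_eventually_hasDerivAt
    ((eventually_ne_nhds hx).mono fun _ hy => hasDerivAt_f4 hy) (by fun_prop)

lemma mfR_f4 {x : ℝ} (hx : x ≠ 0) : mfR f4 x = 2 * |x| := by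
  rw [mfR_eq_abs_of_limitingSubdiffR_eq (limitingSubdiffR_f4 hx), abs_mul, abs_two]

lemma tendsto_mfR_f4_nhdsNE_zero : Tendsto (mfR f4) (𝓝[≠] 0) (𝓝 0) := by
  have h : Tendsto (fun x : ℝ => 2 * |x|) (𝓝[≠] 0) (𝓝 0) := by
    simpa using ((continuous_abs.tendsto (0 : ℝ)).const_mul 2).mono_left nhdsWithin_le_nhds
  exact h.congr' (eventually_nhdsWithin_of_forall fun _ hx => (mfR_f4 hx).symm)

lemma one_le_abs_f4_sub_f4_zero_rpow {x : ℝ} (hx : x < 0) (p : ℝ) (hp : 0 ≤ p) :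
    1 ≤ |f4 x - f4 0| ^ p := by
  have hjump : f4 x - f4 0 = 1 + x ^ 2 := by rw [f4_of_neg hx, f4_of_nonneg le_rfl]; ring
  rw [hjump, abs_of_pos (by positivity)]
  exact Real.one_le_rpow (le_add_of_nonneg_right (sq_nonneg x)) hp

theorem stmt4 :
    (∀ x : ℝ, x ≠ 0 → limitingSubdiffR f4 x = {2 * x}) ∧
    (∀ x : ℝ, x ≠ 0 → mfR f4 x = 2 * |x|) ∧
    (∃ ε > (0:ℝ), ∀ x : ℝ, x ≠ 0 → |x| ≤ ε → mfR f4 x ≥ 2 * |x|) ∧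
    ¬ ∃ c > (0:ℝ), ∃ ε > (0:ℝ), ∀ x : ℝ, 0 < |x| → |x| < ε →
        mfR f4 x ≥ c * |f4 x - f4 0| ^ ((1:ℝ)/2) := by
  refine ⟨fun x hx => limitingSubdiffR_f4 hx, fun x hx => mfR_f4 hx,
    ⟨1, one_pos, fun x hx _ => (mfR_f4 hx).ge⟩, ?_⟩
  rintro ⟨c, hc, ε, hε, hloj⟩
  have hlarge : ∀ᶠ x in 𝓝[<] (0 : ℝ), c ≤ mfR f4 x := by
    filter_upwards [Ioo_mem_nhdsLT (neg_lt_zero.mpr hε)] with x ⟨hεx, hx⟩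
    have hxε : |x| < ε := by rw [abs_of_neg hx]; linarith
    calc c ≤ c * |f4 x - f4 0| ^ ((1:ℝ)/2) :=
          le_mul_of_one_le_right hc.le (one_le_abs_f4_sub_f4_zero_rpow hx _ (by norm_num))
      _ ≤ mfR f4 x := hloj x (abs_pos.mpr hx.ne) hxε
  have hsmall : ∀ᶠ x in 𝓝[<] (0 : ℝ), mfR f4 x < c :=
    (tendsto_mfR_f4_nhdsNE_zero.mono_left (nhdsLT_le_nhdsNE 0)).eventually (gt_mem_nhds hc)
  obtain ⟨x, hcx, hxc⟩ := (hlarge.and hsmall).exists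
  exact hcx.not_gt hxc
end
end

section
/- Let f : ℝⁿ → ℝ be locally Lipschitz near x̄ with f(x̄) = 0, and suppose there are constants c > 0, ε > 0, α > 0 with f(x) ≥ c‖x - x̄‖^α for ‖x - x̄‖ ≤ ε, and constants c' > 0, ε' > 0 with m_f(x)·‖x - x̄‖ ≥ c'·|f(x)| for 0 < ‖x - x̄‖ ≤ ε'. Then there exist c'' > 0 and ε'' > 0 such that m_f(x) ≥ c''·|f(x)|^{1 - 1/α} for all 0 < ‖x - x̄‖ ≤ ε''. -/
open Filter Topology Metric

noncomputable section

lemma le_div_rpow_one_div_of_mul_rpow_le {c d y α : ℝ} (hc : 0 < c) (hd : 0 ≤ d) (hα : 0 < α)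
    (h : c * d ^ α ≤ y) : d ≤ (y / c) ^ (1 / α) := by
  have hdα : d ^ α ≤ y / c := by rw [le_div_iff₀ hc]; linarith
  calc d = (d ^ α) ^ (1 / α) := by rw [← Real.rpow_mul hd, mul_one_div_cancel hα.ne', Real.rpow_one]
    _ ≤ (y / c) ^ (1 / α) := by gcongr

-- Read `d = ‖x - x₀‖`, `y = f x`, `m = mf f x`: eliminating `d` between the growth bound and the
-- Bochnak–Łojasiewicz inequality.
lemma mul_rpow_one_sub_one_div_le_of_growth {m d y c c' α : ℝ} (hd : 0 < d) (hc : 0 < c)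
    (hc' : 0 ≤ c') (hα : 0 < α) (hgrowth : c * d ^ α ≤ y) (hBL : c' * y ≤ m * d) :
    c' * c ^ (1 / α) * y ^ (1 - 1 / α) ≤ m := by
  have hy : 0 < y := lt_of_lt_of_le (by positivity) hgrowth
  calc c' * c ^ (1 / α) * y ^ (1 - 1 / α) = c' * y / (y / c) ^ (1 / α) := by
        rw [Real.div_rpow hy.le hc.le, Real.rpow_sub hy, Real.rpow_one]
        field_simp
    _ ≤ c' * y / d := by gcongr; exact le_div_rpow_one_div_of_mul_rpow_le hc hd.le hα hgrowth
    _ ≤ m := by rwa [div_le_iff₀ hd]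

theorem stmt10_general {n : ℕ} (f : EuclideanSpace ℝ (Fin n) → ℝ)
    (x₀ : EuclideanSpace ℝ (Fin n))
    (c ε α c' ε' : ℝ) (hc : 0 < c) (hε : 0 < ε) (hα : 0 < α) (hc' : 0 < c') (hε' : 0 < ε')
    (hgrowth : ∀ x, ‖x - x₀‖ ≤ ε → f x ≥ c * ‖x - x₀‖ ^ α)
    (hBL : ∀ x, 0 < ‖x - x₀‖ → ‖x - x₀‖ ≤ ε' → mf f x * ‖x - x₀‖ ≥ c' * |f x|) :
    ∃ c'' > (0:ℝ), ∃ ε'' > (0:ℝ), ∀ x, 0 < ‖x - x₀‖ → ‖x - x₀‖ ≤ ε'' →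
      mf f x ≥ c'' * |f x| ^ (1 - 1/α) := by
  refine ⟨c' * c ^ (1 / α), by positivity, min ε ε', lt_min hε hε', fun x hx hxε'' => ?_⟩
  have hgx := hgrowth x (hxε''.trans (min_le_left _ _))
  have hfx : |f x| = f x := abs_of_nonneg ((by positivity : (0:ℝ) ≤ c * ‖x - x₀‖ ^ α).trans hgx)
  have hBLx := hBL x hx (hxε''.trans (min_le_right _ _))
  rw [hfx] at hBLx ⊢
  exact mul_rpow_one_sub_one_div_le_of_growth hx hc hc'.le hα hgx hBLx

theorem stmt10 {n : ℕ} (f : EuclideanSpace ℝ (Fin n) → ℝ)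
    (x₀ : EuclideanSpace ℝ (Fin n)) (hfx : f x₀ = 0)
    (hlip : ∃ K : NNReal, ∃ r > (0:ℝ), LipschitzOnWith K f (Metric.ball x₀ r))
    (c ε α c' ε' : ℝ) (hc : 0 < c) (hε : 0 < ε) (hα : 0 < α) (hc' : 0 < c') (hε' : 0 < ε')
    (hgrowth : ∀ x, ‖x - x₀‖ ≤ ε → f x ≥ c * ‖x - x₀‖ ^ α)
    (hBL : ∀ x, 0 < ‖x - x₀‖ → ‖x - x₀‖ ≤ ε' → mf f x * ‖x - x₀‖ ≥ c' * |f x|) :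
    ∃ c'' > (0:ℝ), ∃ ε'' > (0:ℝ), ∀ x, 0 < ‖x - x₀‖ → ‖x - x₀‖ ≤ ε'' →
      mf f x ≥ c'' * |f x| ^ (1 - 1/α) :=
  stmt10_general f x₀ c ε α c' ε' hc hε hα hc' hε' hgrowth hBL
end
end
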